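/- arXiv:2011.11861 — 4 statements merged into one kernel-verified Lean document; each statement's English description precedes it below -/
import Mathlib

section
/- Under the assumption σ(x) = α(x) + ½(∇·β)(x) ≥ σ₀ > 0 on Ω, the quantity |||v||| defined by |||v|||² = (σv⁰, v⁰)_{T_h} + ½⟨|β·n|(v⁰−v^b), v⁰−v^b⟩_{∂T_h} + ½⟨|β·n| v^b, v^b⟩_{∂Ω₊} is a norm on the space V_h⁰, in particular |||v||| = 0 implies v⁰ = 0 on every element and v^b = 0 on every face where β·n ≠ 0. -/
open MeasureTheory

/-- `P_k(K)`: restrictions of `d`-variate polynomials of total degree at most `k`. -/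
def polyDeg (d k : ℕ) : Set (EuclideanSpace ℝ (Fin d) → ℝ) :=
  {f | ∃ p : MvPolynomial (Fin d) ℝ, p.totalDegree ≤ k ∧
    ∀ x : EuclideanSpace ℝ (Fin d), f x = MvPolynomial.eval (fun i => x i) p}

/-- Lemma 2.2, `|||·|||` is a norm on `V_h⁰`: elements are indexed by
`i : ι`, `μ i` is the volume measure on `K_i`, `ν i` the surface measure on `∂K_i` with
normal flux `bn i = β·n`, `νΩ` the surface measure on `∂Ω` with flux `bnΩ = β·n`; the
outflow term `⟨|β·n|v^b,v^b⟩_{∂Ω₊}` is `∫ max(bnΩ,0)(v^b)²`. Assume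
`σ = α + ½∇·β ≥ σ₀ > 0`, that `μ i` does not annihilate nonzero polynomials of degree
`≤ k` on `K_i` (nondegeneracy), and that `|||v|||² = 0`. Then `v⁰ = 0` on every element
and `v^b = 0` (a.e.) on every face point where `β·n ≠ 0`. -/
theorem weak_galerkin_stmt_5 {d k : ℕ} {ι : Type*} [Fintype ι]
    (μ ν : ι → Measure (EuclideanSpace ℝ (Fin d)))
    (bn : ι → EuclideanSpace ℝ (Fin d) → ℝ)
    (νΩ : Measure (EuclideanSpace ℝ (Fin d)))
    (bnΩ σ : EuclideanSpace ℝ (Fin d) → ℝ) (σ0 : ℝ)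
    (v0 : ι → EuclideanSpace ℝ (Fin d) → ℝ)
    (vb : EuclideanSpace ℝ (Fin d) → ℝ)
    (hσ0 : 0 < σ0) (hσ : ∀ x, σ0 ≤ σ x)
    (hv0 : ∀ i, v0 i ∈ polyDeg d k)
    (hnd : ∀ i, ∀ f ∈ polyDeg d k, (∀ᵐ x ∂(μ i), f x = 0) → f = 0)
    (hint1 : ∀ i, Integrable (fun x => σ x * (v0 i x) ^ 2) (μ i))
    (hint2 : ∀ i, Integrable (fun x => |bn i x| * (v0 i x - vb x) ^ 2) (ν i))
    (hint3 : Integrable (fun x => max (bnΩ x) 0 * (vb x) ^ 2) νΩ)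
    (hzero : (∑ i, ∫ x, σ x * (v0 i x) ^ 2 ∂(μ i))
        + (1/2) * (∑ i, ∫ x, |bn i x| * (v0 i x - vb x) ^ 2 ∂(ν i))
        + (1/2) * (∫ x, max (bnΩ x) 0 * (vb x) ^ 2 ∂νΩ) = 0) :
    (∀ i, v0 i = 0) ∧ (∀ i, ∀ᵐ x ∂(ν i), bn i x ≠ 0 → vb x = 0) := by

  have hA : ∀ i, (0:ℝ) ≤ ∫ x, σ x * (v0 i x) ^ 2 ∂(μ i) := fun i =>
    integral_nonneg fun x => mul_nonneg (le_trans hσ0.le (hσ x)) (sq_nonneg _)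
  have hB : ∀ i, (0:ℝ) ≤ ∫ x, |bn i x| * (v0 i x - vb x) ^ 2 ∂(ν i) := fun i =>
    integral_nonneg fun x => mul_nonneg (abs_nonneg _) (sq_nonneg _)
  have hC : (0:ℝ) ≤ ∫ x, max (bnΩ x) 0 * (vb x) ^ 2 ∂νΩ :=
    integral_nonneg fun x => mul_nonneg (le_max_right _ _) (sq_nonneg _)
  have hSA : (0:ℝ) ≤ ∑ i, ∫ x, σ x * (v0 i x) ^ 2 ∂(μ i) :=
    Finset.sum_nonneg fun i _ => hA i
  have hSB : (0:ℝ) ≤ ∑ i, ∫ x, |bn i x| * (v0 i x - vb x) ^ 2 ∂(ν i) :=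
    Finset.sum_nonneg fun i _ => hB i
  have hSA0 : (∑ i, ∫ x, σ x * (v0 i x) ^ 2 ∂(μ i)) = 0 := by linarith
  have hSB0 : (∑ i, ∫ x, |bn i x| * (v0 i x - vb x) ^ 2 ∂(ν i)) = 0 := by linarith
  have hA0 : ∀ i, (∫ x, σ x * (v0 i x) ^ 2 ∂(μ i)) = 0 := fun i =>
    (Finset.sum_eq_zero_iff_of_nonneg fun j _ => hA j).mp hSA0 i (Finset.mem_univ i)
  have hB0 : ∀ i, (∫ x, |bn i x| * (v0 i x - vb x) ^ 2 ∂(ν i)) = 0 := fun i =>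
    (Finset.sum_eq_zero_iff_of_nonneg fun j _ => hB j).mp hSB0 i (Finset.mem_univ i)
  have hv0z : ∀ i, v0 i = 0 := by
    intro i
    have hae : (fun x => σ x * (v0 i x) ^ 2) =ᵐ[μ i] 0 :=
      (integral_eq_zero_iff_of_nonneg
        (fun x => mul_nonneg (le_trans hσ0.le (hσ x)) (sq_nonneg _)) (hint1 i)).mp (hA0 i)
    refine hnd i (v0 i) (hv0 i) ?_
    filter_upwards [hae] with x hx
    have hσx : σ x ≠ 0 := ne_of_gt (lt_of_lt_of_le hσ0 (hσ x))
    have : (v0 i x) ^ 2 = 0 := by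
      have := hx
      simp only [Pi.zero_apply] at this
      exact (mul_eq_zero.mp this).resolve_left hσx
    exact pow_eq_zero_iff (two_ne_zero) |>.mp this
  refine ⟨hv0z, fun i => ?_⟩
  have hae : (fun x => |bn i x| * (v0 i x - vb x) ^ 2) =ᵐ[ν i] 0 :=
    (integral_eq_zero_iff_of_nonneg
      (fun x => mul_nonneg (abs_nonneg _) (sq_nonneg _)) (hint2 i)).mp (hB0 i)
  filter_upwards [hae] with x hx hbn
  have hx' : |bn i x| * (v0 i x - vb x) ^ 2 = 0 := hx
  have h1 : (v0 i x - vb x) ^ 2 = 0 :=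
    (mul_eq_zero.mp hx').resolve_left (abs_ne_zero.mpr hbn)
  have h2 : v0 i x - vb x = 0 := pow_eq_zero_iff (two_ne_zero) |>.mp h1
  have h3 : v0 i x = 0 := by rw [hv0z i]; rfl
  linarith
end

section
/- Let K ⊂ ℝ^d be an element with at most one designated outflow face e_K⁺, and define P_h⁺ : H¹(K) → P_k(K) by the conditions ∫_K (u − P_h⁺u) v dx = 0 for all v ∈ P_{k−1}(K) and ∫_{e_K⁺} (u − P_h⁺u) v ds = 0 for all v ∈ P_k(e_K⁺). Then this linear system uniquely determines P_h⁺u; i.e., if p ∈ P_k(K) satisfies ∫_K p v = 0 for all v ∈ P_{k−1}(K) and ∫_{e_K⁺} p v ds = 0 for all v ∈ P_k(e_K⁺), then p = 0. -/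
open MeasureTheory
open scoped RealInnerProductSpace

/-!
Testing the face condition with `q = p` gives `∫_e p² = 0`, so `p` vanishes `μH[d-1]`-a.e. on
`e`. Along an isometric affine parametrisation of the hyperplane `⟪x, n⟫ = c`, `p` becomes a
polynomial in `d - 1` variables vanishing on a set of positive measure; since the zero set of a
nonzero polynomial is Lebesgue-null, `p` vanishes on the whole hyperplane. Hence
`p = (⟪x, n⟫ - c) q` with `deg q < k`, and testing the interior condition with `q` gives
`∫_K (c - ⟪x, n⟫) q² = 0`. The weight is positive on `K`, so `q` vanishes on the nonempty open
set `K`, hence identically, and so does `p`.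
-/

open MvPolynomial

theorem Continuous.integrableOn_of_isBounded {X : Type*} [MetricSpace X] [ProperSpace X]
    [MeasurableSpace X] [BorelSpace X] {μ : Measure X} {s : Set X} {f : X → ℝ}
    (hf : Continuous f) (hs : Bornology.IsBounded s) (hμs : μ s ≠ ⊤) : IntegrableOn f s μ := by
  obtain ⟨C, hC⟩ := hs.isCompact_closure.exists_bound_of_continuousOn hf.continuousOn
  exact Measure.integrableOn_of_bounded hμs hf.aestronglyMeasurable
    (ae_restrict_of_ae_restrict_of_subset subset_closure
      (ae_restrict_of_forall_mem isClosed_closure.measurableSet hC))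

theorem ae_eq_zero_of_integral_mul_sq_eq_zero {α : Type*} [MeasurableSpace α] {μ : Measure α}
    {w g : α → ℝ} (hw : ∀ᵐ x ∂μ, 0 < w x) (hint : Integrable (fun x => w x * g x ^ 2) μ)
    (h : ∫ x, w x * g x ^ 2 ∂μ = 0) : g =ᵐ[μ] 0 := by
  have hzero := (integral_eq_zero_iff_of_nonneg_ae (hw.mono fun x hx => by positivity) hint).mp h
  filter_upwards [hzero, hw] with x hx hwx
  simpa [hwx.ne'] using hx

namespace MvPolynomial

section Substitution

variable {σ τ R : Type*} [CommSemiring R]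

theorem totalDegree_bind₁_le {f : σ → MvPolynomial τ R} (hf : ∀ i, (f i).totalDegree ≤ 1)
    (P : MvPolynomial σ R) : (bind₁ f P).totalDegree ≤ P.totalDegree := by
  conv_lhs => rw [P.as_sum, map_sum]
  refine (totalDegree_finsetSum _ _).trans (Finset.sup_le fun s hs => ?_)
  rw [bind₁_monomial]
  calc (C (coeff s P) * ∏ i ∈ s.support, f i ^ s i).totalDegree
      ≤ ∑ i ∈ s.support, (f i ^ s i).totalDegree := by
        refine (totalDegree_mul _ _).trans ?_
        rw [totalDegree_C, zero_add]
        exact totalDegree_finsetProd _ _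
    _ ≤ ∑ i ∈ s.support, s i :=
        Finset.sum_le_sum fun i _ =>
          (totalDegree_pow _ _).trans (mul_le_of_le_one_right (Nat.zero_le _) (hf i))
    _ ≤ P.totalDegree := le_totalDegree hs

theorem aeval_sub_aeval_mem {A : Type*} [CommRing A] [Algebra R A] {I : Ideal A}
    {f g : σ → A} (h : ∀ i, f i - g i ∈ I) (P : MvPolynomial σ R) :
    aeval f P - aeval g P ∈ I := by
  rw [← Ideal.Quotient.eq, ← Ideal.Quotient.mkₐ_eq_mk R, comp_aeval_apply, comp_aeval_apply]
  congr 2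
  funext i
  simpa only [Ideal.Quotient.mkₐ_eq_mk, Ideal.Quotient.eq] using h i

end Substitution

section AffineDivisor

variable {σ 𝕜 : Type*} [Field 𝕜] [Fintype σ] [DecidableEq σ]

theorem totalDegree_lt_totalDegree_affine_mul {a : σ → 𝕜} (b : 𝕜) {i : σ} (hi : a i ≠ 0)
    {Q : MvPolynomial σ 𝕜} (hQ : Q ≠ 0) :
    Q.totalDegree < ((∑ j, C (a j) * X j - C b) * Q).totalDegree := by
  have hcoeff : coeff (Finsupp.single i 1) (∑ j, C (a j) * X j - C b) = a i := by
    simp [coeff_sum, coeff_X, Finsupp.single_eq_single_iff, eq_comm (a := (0 : σ →₀ ℕ))]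
  have hL : ∑ j, C (a j) * X j - C b ≠ 0 := fun h => hi (by rw [← hcoeff, h, coeff_zero])
  have hdeg := le_totalDegree (s := Finsupp.single i 1) (mem_support_iff.mpr (hcoeff ▸ hi))
  rw [Finsupp.sum_single_index rfl] at hdeg
  rw [totalDegree_mul_of_isDomain hL hQ]
  omega

theorem affine_dvd_of_eval_eq_zero [Infinite 𝕜] {a : σ → 𝕜} {b : 𝕜} {i : σ} (hi : a i ≠ 0)
    {P : MvPolynomial σ 𝕜} (hP : ∀ x : σ → 𝕜, ∑ j, a j * x j = b → eval x P = 0) :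
    (∑ j, C (a j) * X j - C b) ∣ P := by
  set L : MvPolynomial σ 𝕜 := ∑ j, C (a j) * X j - C b
  -- `g` sends `x` to its projection onto `{L = 0}` along the `i`-th axis, so `x - g x ∈ (L)`
  set g : σ → MvPolynomial σ 𝕜 := fun j => X j - C ((Pi.single i (a i)⁻¹ : σ → 𝕜) j) * L
  have hproj : bind₁ g P = 0 := MvPolynomial.funext fun x => by
    have hcomp : eval x (bind₁ g P) = eval (fun j => eval x (g j)) P := eval₂Hom_bind₁ _ _ _ _
    rw [hcomp, map_zero]
    refine hP _ ?_
    simp only [g, L, map_sub, map_mul, map_sum, eval_C, eval_X, mul_sub, Finset.sum_sub_distrib,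
      Pi.single_apply, mul_ite, mul_zero, ite_mul, zero_mul, Finset.sum_ite_eq', Finset.mem_univ,
      if_true]
    field_simp
    ring
  have hmem : aeval X P - aeval g P ∈ Ideal.span {L} :=
    aeval_sub_aeval_mem (fun j => by
      simpa only [g, sub_sub_cancel] using
        Ideal.mul_mem_left _ _ (Ideal.mem_span_singleton_self L)) P
  rwa [aeval_X_left_apply, aeval_eq_bind₁, hproj, sub_zero, Ideal.mem_span_singleton] at hmem

end AffineDivisor

theorem eval_cons_eq_eval_eval_C {R : Type*} [CommSemiring R] {m : ℕ}
    (P : MvPolynomial (Fin (m + 1)) R) (a : R) (s : Fin m → R) :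
    eval (Fin.cons a s) P = eval s (Polynomial.eval (C a) (finSuccEquiv R m P)) := by
  rw [eval_eq_eval_mv_eval', ← Polynomial.eval_map_apply, eval_C]

theorem volume_zeroSet_eq_zero : ∀ {m : ℕ} {P : MvPolynomial (Fin m) ℝ}, P ≠ 0 →
    volume {x : Fin m → ℝ | eval x P = 0} = 0
  | 0, P, hP => by
    obtain ⟨c, rfl⟩ : ∃ c, P = C c := ⟨_, eq_C_of_isEmpty P⟩
    have hc : c ≠ 0 := by rintro rfl; exact hP C_0
    simp [hc]
  | m + 1, P, hP => by
    set F := finSuccEquiv ℝ m P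
    have hF : F ≠ 0 := (map_ne_zero_iff _ (finSuccEquiv ℝ m).injective).mpr hP
    set e := MeasurableEquiv.piFinSuccAbove (fun _ : Fin (m + 1) => ℝ) 0
    have hZ : MeasurableSet {x : Fin (m + 1) → ℝ | eval x P = 0} :=
      measurableSet_eq_fun (continuous_eval P).measurable measurable_const
    -- Fubini: off the finitely many `a` with `F(C a) = 0`, the slice `x₀ = a` is null by induction
    have hslice : ∀ᵐ a : ℝ, volume (Prod.mk a ⁻¹' (e.symm ⁻¹' {x | eval x P = 0})) = 0 := by
      have hfin : {a : ℝ | Polynomial.eval (C a) F = 0}.Finite :=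
        (Polynomial.finite_setOfPred_isRoot hF).preimage (C_injective _ _).injOn
      filter_upwards [measure_eq_zero_iff_ae_notMem.mp (hfin.countable.measure_zero volume)]
        with a ha
      have hsection : Prod.mk a ⁻¹' (e.symm ⁻¹' {x | eval x P = 0})
          = {s | eval s (Polynomial.eval (C a) F) = 0} := by
        ext s
        simp only [e, F, Set.mem_preimage, Set.mem_ofPred_eq,
          MeasurableEquiv.piFinSuccAbove_symm_apply, Fin.insertNthEquiv_zero]
        exact Iff.of_eq (congrArg (· = 0) (eval_cons_eq_eval_eval_C P a s))
      rw [hsection]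
      exact volume_zeroSet_eq_zero ha
    rw [← (volume_preserving_piFinSuccAbove (fun _ : Fin (m + 1) => ℝ) 0).symm.measure_preimage
      hZ.nullMeasurableSet, Measure.volume_eq_prod]
    exact (Measure.measure_prod_null (e.symm.measurable hZ)).mpr hslice

theorem eq_zero_of_measure_zeroSet_ne_zero {m : ℕ} (μ : Measure (EuclideanSpace ℝ (Fin m)))
    [μ.IsAddHaarMeasure] {P : MvPolynomial (Fin m) ℝ} (h : μ {x | eval x.ofLp P = 0} ≠ 0) :
    P = 0 := by
  by_contra hP
  refine h (Measure.absolutelyContinuous_isAddHaarMeasure μ volume ?_)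
  exact ((PiLp.volume_preserving_ofLp (Fin m)).measure_preimage
    (measurableSet_eq_fun (continuous_eval P).measurable measurable_const).nullMeasurableSet).trans
    (volume_zeroSet_eq_zero hP)

theorem eq_zero_of_setIntegral_mul_sq_eq_zero {m : ℕ}
    {K : Set (EuclideanSpace ℝ (Fin m))} (hKopen : IsOpen K) (hKne : K.Nonempty)
    (hKbdd : Bornology.IsBounded K) {w : EuclideanSpace ℝ (Fin m) → ℝ} (hw : Continuous w)
    (hwK : ∀ x ∈ K, 0 < w x) {Q : MvPolynomial (Fin m) ℝ}
    (h : ∫ x in K, w x * eval x.ofLp Q ^ 2 = 0) : Q = 0 := by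
  have hQ : Continuous fun x : EuclideanSpace ℝ (Fin m) => eval x.ofLp Q :=
    (continuous_eval Q).comp (PiLp.continuous_ofLp 2 _)
  have hae := ae_eq_zero_of_integral_mul_sq_eq_zero
    (ae_restrict_of_forall_mem hKopen.measurableSet hwK)
    ((hw.mul (hQ.pow 2)).integrableOn_of_isBounded hKbdd hKbdd.measure_lt_top.ne) h
  have hKzero : K ⊆ {x | eval x.ofLp Q = 0} :=
    Measure.eqOn_open_of_ae_eq hae hKopen hQ.continuousOn continuousOn_const
  exact eq_zero_of_measure_zeroSet_ne_zero volume
    ((hKopen.measure_pos volume hKne).trans_le (measure_mono hKzero)).ne'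

end MvPolynomial

theorem continuous_of_mem_polyDeg {d k : ℕ} {p : EuclideanSpace ℝ (Fin d) → ℝ}
    (hp : p ∈ polyDeg d k) : Continuous p := by
  obtain ⟨P, -, hP⟩ := hp
  rw [funext hP]
  exact (continuous_eval P).comp (PiLp.continuous_ofLp 2 _)

theorem comp_mem_polyDeg {m d k : ℕ} {p : EuclideanSpace ℝ (Fin d) → ℝ} (hp : p ∈ polyDeg d k)
    (f : EuclideanSpace ℝ (Fin m) →ᵃ[ℝ] EuclideanSpace ℝ (Fin d)) : p ∘ f ∈ polyDeg m k := by
  obtain ⟨P, hPdeg, hP⟩ := hp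
  set b := EuclideanSpace.basisFun (Fin m) ℝ
  set g : Fin d → MvPolynomial (Fin m) ℝ :=
    fun i => C (f 0 i) + ∑ j, C (f.linear (b j) i) * X j
  have hg : ∀ i, (g i).totalDegree ≤ 1 := fun i =>
    (totalDegree_add _ _).trans <| max_le (by rw [totalDegree_C]; exact zero_le_one) <|
      (totalDegree_finsetSum _ _).trans <| Finset.sup_le fun j _ =>
        (totalDegree_mul _ _).trans (by rw [totalDegree_C, totalDegree_X])
  refine ⟨bind₁ g P, (totalDegree_bind₁_le hg P).trans hPdeg, fun y => ?_⟩
  have hcomp : eval (fun j => y j) (bind₁ g P) = eval (fun i => eval (fun j => y j) (g i)) P :=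
    eval₂Hom_bind₁ _ _ _ _
  rw [hcomp, Function.comp_apply, hP]
  refine congrArg (eval · P) (funext fun i => ?_)
  have hfy : f y = f.linear y + f 0 := by simpa using f.map_vadd 0 y
  conv_lhs => rw [hfy, ← b.sum_repr y]
  simpa [g, b, mul_comm] using add_comm _ _

theorem exists_affineIsometry_range_eq_hyperplane {E : Type*} [NormedAddCommGroup E]
    [InnerProductSpace ℝ E] {m : ℕ} (hE : Module.finrank ℝ E = m + 1) {n : E} (hn : ‖n‖ = 1)
    (c : ℝ) : ∃ ψ : EuclideanSpace ℝ (Fin m) →ᵃⁱ[ℝ] E, Set.range ψ = {x | ⟪x, n⟫ = c} := by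
  have : Fact (Module.finrank ℝ E = m + 1) := ⟨hE⟩
  have : FiniteDimensional ℝ E := Module.finite_of_finrank_eq_succ hE
  have hn0 : n ≠ 0 := norm_ne_zero_iff.mp (hn ▸ one_ne_zero)
  set V := (ℝ ∙ n)ᗮ
  let b : OrthonormalBasis (Fin m) ℝ V :=
    (stdOrthonormalBasis ℝ V).reindex (finCongr (Submodule.finrank_orthogonal_span_singleton hn0))
  let Φ : EuclideanSpace ℝ (Fin m) →ₗᵢ[ℝ] E := V.subtypeₗᵢ.comp b.repr.symm.toLinearIsometry
  refine ⟨(AffineIsometryEquiv.constVAdd ℝ E (c • n)).toAffineIsometry.comp Φ.toAffineIsometry, ?_⟩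
  have hnn : ⟪n, n⟫ = 1 := by rw [real_inner_self_eq_norm_sq, hn, one_pow]
  ext x
  constructor
  · rintro ⟨y, rfl⟩
    have hV : ⟪(b.repr.symm y : E), n⟫ = 0 :=
      Submodule.mem_orthogonal_singleton_iff_inner_left.mp (b.repr.symm y).2
    simp [Φ, inner_add_left, real_inner_smul_left, hn, hV]
  · intro hx
    have hV : x - c • n ∈ V := by
      rw [Submodule.mem_orthogonal_singleton_iff_inner_left, inner_sub_left, real_inner_smul_left,
        hnn, hx, mul_one, sub_self]
    exact ⟨b.repr ⟨x - c • n, hV⟩, by simp [Φ]⟩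

instance isAddHaarMeasure_hausdorffMeasure_euclideanSpace (m : ℕ) :
    (μH[m] : Measure (EuclideanSpace ℝ (Fin m))).IsAddHaarMeasure := by
  simpa using isAddHaarMeasure_hausdorffMeasure (E := EuclideanSpace ℝ (Fin m))

theorem hausdorffMeasure_lt_top_of_subset_range {m : ℕ} {X : Type*} [MetricSpace X]
    [MeasurableSpace X] [BorelSpace X] {ψ : EuclideanSpace ℝ (Fin m) → X} (hψ : Isometry ψ)
    {s : Set X} (hs : s ⊆ Set.range ψ) (hsb : Bornology.IsBounded s) : μH[m] s < ⊤ := by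
  rw [← Set.image_preimage_eq_of_subset hs, hψ.hausdorffMeasure_image (Or.inl m.cast_nonneg)]
  exact (hψ.antilipschitz.isBounded_preimage hsb).measure_lt_top

theorem comp_eq_zero_of_ae_eq_zero {m d k : ℕ} {p : EuclideanSpace ℝ (Fin d) → ℝ}
    (hp : p ∈ polyDeg d k) (ψ : EuclideanSpace ℝ (Fin m) →ᵃⁱ[ℝ] EuclideanSpace ℝ (Fin d))
    {s : Set (EuclideanSpace ℝ (Fin d))} (hs : s ⊆ Set.range ψ) (hspos : μH[m] s ≠ 0)
    (hps : p =ᵐ[μH[m].restrict s] 0) (y : EuclideanSpace ℝ (Fin m)) : p (ψ y) = 0 := by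
  obtain ⟨R, -, hR⟩ := comp_mem_polyDeg hp ψ.toAffineMap
  suffices R = 0 by simpa [this] using hR y
  have hmeas : MeasurableSet {x | p x ≠ 0} :=
    (measurableSet_eq_fun (continuous_of_mem_polyDeg hp).measurable measurable_const).compl
  have hnull : μH[m] ({x | p x ≠ 0} ∩ s) = 0 :=
    (Measure.restrict_apply hmeas).symm.trans (ae_iff.mp hps)
  have hcover : s ⊆ ψ '' {y | eval y.ofLp R = 0} ∪ {x | p x ≠ 0} ∩ s := by
    intro x hx
    by_cases hpx : p x = 0
    · obtain ⟨y, rfl⟩ := hs hx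
      exact Or.inl ⟨y, by simpa [← hR] using hpx, rfl⟩
    · exact Or.inr ⟨hpx, hx⟩
  refine MvPolynomial.eq_zero_of_measure_zeroSet_ne_zero μH[m] fun hzero => hspos ?_
  refine measure_mono_null hcover (measure_union_null ?_ hnull)
  rw [ψ.isometry.hausdorffMeasure_image (Or.inl m.cast_nonneg), hzero]

theorem eq_zero_on_hyperplane_of_integral_mul_self_eq_zero {m k : ℕ}
    {p : EuclideanSpace ℝ (Fin (m + 1)) → ℝ} (hp : p ∈ polyDeg (m + 1) k)
    {n : EuclideanSpace ℝ (Fin (m + 1))} (hn : ‖n‖ = 1) {c : ℝ}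
    {e : Set (EuclideanSpace ℝ (Fin (m + 1)))} (hebdd : Bornology.IsBounded e)
    (hplane : ∀ x ∈ e, ⟪x, n⟫ = c) (hepos : μH[m] e ≠ 0)
    (h : ∫ x in e, p x * p x ∂μH[m] = 0) : ∀ x, ⟪x, n⟫ = c → p x = 0 := by
  obtain ⟨ψ, hψ⟩ := exists_affineIsometry_range_eq_hyperplane finrank_euclideanSpace_fin hn c
  have he : e ⊆ Set.range ψ := hψ ▸ hplane
  have hpe : p =ᵐ[μH[m].restrict e] 0 := by
    refine ae_eq_zero_of_integral_mul_sq_eq_zero (w := fun _ => 1) (ae_of_all _ fun _ => one_pos)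
      ((continuous_const.mul ((continuous_of_mem_polyDeg hp).pow 2)).integrableOn_of_isBounded
        hebdd (hausdorffMeasure_lt_top_of_subset_range ψ.isometry he hebdd).ne) ?_
    simpa [sq] using h
  intro x hx
  obtain ⟨y, rfl⟩ : x ∈ Set.range ψ := hψ ▸ hx
  exact comp_eq_zero_of_ae_eq_zero hp ψ he hepos hpe y

theorem weak_galerkin_stmt_12_general {d k : ℕ}
    (K e : Set (EuclideanSpace ℝ (Fin d)))
    (n : EuclideanSpace ℝ (Fin d)) (c : ℝ)
    (hKopen : IsOpen K) (hKne : K.Nonempty)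
    (hKbdd : Bornology.IsBounded K)
    (hn : ‖n‖ = 1)
    (heK : e ⊆ frontier K)
    (hplane : ∀ x ∈ e, ⟪x, n⟫ = c)
    (hside : ∀ x ∈ K, ⟪x, n⟫ < c)
    (hepos : 0 < μH[((d : ℝ) - 1)] e)
    (p : EuclideanSpace ℝ (Fin d) → ℝ) (hp : p ∈ polyDeg d k)
    (hmomK : ∀ q : EuclideanSpace ℝ (Fin d) → ℝ,
      (∃ P : MvPolynomial (Fin d) ℝ, P.totalDegree < k ∧
        ∀ x : EuclideanSpace ℝ (Fin d), q x = MvPolynomial.eval (fun i => x i) P) →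
      ∫ x in K, p x * q x ∂volume = 0)
    (hmome : ∀ q ∈ polyDeg d k, ∫ x in e, p x * q x ∂(μH[((d : ℝ) - 1)]) = 0) :
    ∀ x, p x = 0 := by
  obtain ⟨i, hi⟩ : ∃ i, n i ≠ 0 := by
    by_contra! h
    exact one_ne_zero (hn ▸ (norm_eq_zero.mpr (PiLp.ext h) : ‖n‖ = 0))
  obtain ⟨m, rfl⟩ : ∃ m, d = m + 1 := Nat.exists_eq_succ_of_ne_zero i.pos.ne'
  rw [Nat.cast_add_one, add_sub_cancel_right] at hepos hmome
  have hinner : ∀ x : EuclideanSpace ℝ (Fin (m + 1)), ⟪x, n⟫ = ∑ j, n j * x j := fun x => by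
    simp [PiLp.inner_apply]
  have hpH := eq_zero_on_hyperplane_of_integral_mul_self_eq_zero hp hn
    (hKbdd.closure.subset (heK.trans frontier_subset_closure)) hplane hepos.ne' (hmome p hp)
  obtain ⟨P, hPdeg, hPeval⟩ := hp
  obtain ⟨Q, hPQ⟩ := affine_dvd_of_eval_eq_zero (b := c) hi (P := P) fun x hx => by
    rw [← hPeval (WithLp.toLp 2 x)]
    exact hpH _ ((hinner _).trans hx)
  suffices hQ : Q = 0 by intro x; rw [hPeval, hPQ, hQ, mul_zero, map_zero]
  by_contra hQ
  refine hQ (eq_zero_of_setIntegral_mul_sq_eq_zero hKopen hKne hKbdd (w := fun x => c - ⟪x, n⟫)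
    (by fun_prop) (fun x hx => sub_pos.mpr (hside x hx)) ?_)
  have hmom := hmomK _ ⟨Q, (totalDegree_lt_totalDegree_affine_mul c hi hQ).trans_le (hPQ ▸ hPdeg),
    fun _ => rfl⟩
  rw [← neg_eq_zero, ← integral_neg, ← hmom]
  congr 1
  funext x
  rw [hPeval, hPQ]
  simp only [map_mul, map_sub, map_sum, eval_C, eval_X, hinner]
  ring

/-- well-posedness of the special projection `P_h⁺`, uniqueness part:
let `K ⊂ ℝ^d` be a nonempty open bounded convex element and let the outflow face
`e ⊆ ∂K` lie in the supporting hyperplane `{x : ⟪x,n⟫ = c}` (with `K` strictly on one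
side) and have positive `(d−1)`-dimensional Hausdorff measure. If `p ∈ P_k(K)` satisfies
`∫_K p q = 0` for all `q ∈ P_{k−1}(K)` (vacuous for `k = 0`, i.e. `P_{-1} = {0}`) and
`∫_e p q ds = 0` for all `q ∈ P_k(e)`, then `p ≡ 0`. Hence the square linear system
defining `P_h⁺ u` is uniquely solvable. -/
theorem weak_galerkin_stmt_12 {d k : ℕ} (hd : 1 ≤ d)
    (K e : Set (EuclideanSpace ℝ (Fin d)))
    (n : EuclideanSpace ℝ (Fin d)) (c : ℝ)
    (hKopen : IsOpen K) (hKne : K.Nonempty) (hKconv : Convex ℝ K)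
    (hKbdd : Bornology.IsBounded K)
    (hn : ‖n‖ = 1)
    (heK : e ⊆ frontier K)
    (hplane : ∀ x ∈ e, ⟪x, n⟫ = c)
    (hside : ∀ x ∈ K, ⟪x, n⟫ < c)
    (hepos : 0 < μH[((d : ℝ) - 1)] e)
    (p : EuclideanSpace ℝ (Fin d) → ℝ) (hp : p ∈ polyDeg d k)
    (hmomK : ∀ q : EuclideanSpace ℝ (Fin d) → ℝ,
      (∃ P : MvPolynomial (Fin d) ℝ, P.totalDegree < k ∧
        ∀ x : EuclideanSpace ℝ (Fin d), q x = MvPolynomial.eval (fun i => x i) P) →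
      ∫ x in K, p x * q x ∂volume = 0)
    (hmome : ∀ q ∈ polyDeg d k, ∫ x in e, p x * q x ∂(μH[((d : ℝ) - 1)]) = 0) :
    ∀ x, p x = 0 :=
  weak_galerkin_stmt_12_general K e n c hKopen hKne hKbdd hn heK hplane hside hepos p hp hmomK hmome
end

section
/- Let e be a face of an element K with β Lipschitz and |β·n(x)| > h_K for all x ∈ e (i.e., e ∉ E_h⁰), and let β^c be any constant vector with |β(x) − β^c| ≤ |β|_{1,∞} h_K on K. Then for any φ, ψ ∈ L₂(e): |∫_e ((β − β^c)·n) φ ψ ds| ≤ |β|_{1,∞} h_K^{1/2} ‖φ‖_{L₂(e)} · ‖ |β·n|^{1/2} ψ ‖_{L₂(e)}. -/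
/-!
On `e` the factor `(β − β^c)·n` is bounded by `L h_K`, and since `h_K < |β·n|` one of the
two factors `√h_K` can be traded for `√|β·n|`, giving the pointwise bound
`|(β − β^c)·n| ≤ L √h_K √|β·n|`. Cauchy–Schwarz in `L₂(e)` applied to `|φ|` and
`√|β·n| |ψ|` then finishes the estimate.
-/

open MeasureTheory
open scoped RealInnerProductSpace

section CauchySchwarz

variable {α : Type*} [MeasurableSpace α] {μ : Measure α} {f g : α → ℝ}

theorem memLp_two_sqrt (hf0 : 0 ≤ᵐ[μ] f) (hf : Integrable f μ) :
    MemLp (fun x => √(f x)) 2 μ := by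
  refine (memLp_two_iff_integrable_sq
    (Real.continuous_sqrt.comp_aestronglyMeasurable hf.aestronglyMeasurable)).2 ?_
  refine hf.congr ?_
  filter_upwards [hf0] with x hx
  exact (Real.sq_sqrt hx).symm

theorem integrable_sqrt_mul_sqrt (hf0 : 0 ≤ᵐ[μ] f) (hg0 : 0 ≤ᵐ[μ] g)
    (hf : Integrable f μ) (hg : Integrable g μ) :
    Integrable (fun x => √(f x) * √(g x)) μ :=
  (memLp_two_sqrt hf0 hf).integrable_mul (memLp_two_sqrt hg0 hg)

theorem integral_sqrt_mul_sqrt_le (hf0 : 0 ≤ᵐ[μ] f) (hg0 : 0 ≤ᵐ[μ] g)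
    (hf : Integrable f μ) (hg : Integrable g μ) :
    ∫ x, √(f x) * √(g x) ∂μ ≤ √(∫ x, f x ∂μ) * √(∫ x, g x ∂μ) := by
  have integral_sqrt_rpow_two {h : α → ℝ} (h0 : 0 ≤ᵐ[μ] h) :
      ∫ x, √(h x) ^ (2 : ℝ) ∂μ = ∫ x, h x ∂μ := by
    refine integral_congr_ae ?_
    filter_upwards [h0] with x hx
    rw [Real.rpow_two, Real.sq_sqrt hx]
  have := integral_mul_le_Lp_mul_Lq_of_nonneg Real.HolderConjugate.two_two
    (.of_forall fun x => Real.sqrt_nonneg (f x)) (.of_forall fun x => Real.sqrt_nonneg (g x))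
    (by simpa using memLp_two_sqrt hf0 hf) (by simpa using memLp_two_sqrt hg0 hg)
  rwa [integral_sqrt_rpow_two hf0, integral_sqrt_rpow_two hg0, ← Real.sqrt_eq_rpow,
    ← Real.sqrt_eq_rpow] at this

end CauchySchwarz

theorem mul_le_mul_sqrt_mul_sqrt {L h t : ℝ} (hL : 0 ≤ L) (hh : 0 ≤ h) (hht : h ≤ t) :
    L * h ≤ L * √h * √t := by
  calc L * h = L * √h * √h := by rw [mul_assoc, Real.mul_self_sqrt hh]
    _ ≤ L * √h * √t := by gcongr

theorem abs_inner_sub_le_mul_sqrt {E : Type*} [NormedAddCommGroup E] [InnerProductSpace ℝ E]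
    {b c n : E} {L h : ℝ} (hn : ‖n‖ = 1) (hL : 0 ≤ L) (hh : 0 ≤ h)
    (hfar : h < |⟪b, n⟫|) (hclose : ‖b - c‖ ≤ L * h) :
    |⟪b - c, n⟫| ≤ L * √h * √|⟪b, n⟫| :=
  calc |⟪b - c, n⟫| ≤ ‖b - c‖ * ‖n‖ := abs_real_inner_le_norm _ _
    _ ≤ L * h := by rwa [hn, mul_one]
    _ ≤ L * √h * √|⟪b, n⟫| := mul_le_mul_sqrt_mul_sqrt hL hh hfar.le

theorem weak_galerkin_stmt_14_general {d : ℕ} (ν : Measure (EuclideanSpace ℝ (Fin d)))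
    (β : EuclideanSpace ℝ (Fin d) → EuclideanSpace ℝ (Fin d))
    (βc n : EuclideanSpace ℝ (Fin d)) (hK L : ℝ)
    (φ ψ : EuclideanSpace ℝ (Fin d) → ℝ)
    (hn : ‖n‖ = 1) (hL : 0 ≤ L) (hhK : 0 ≤ hK)
    (hfar : ∀ᵐ x ∂ν, hK < |⟪β x, n⟫|)
    (hclose : ∀ᵐ x ∂ν, ‖β x - βc‖ ≤ L * hK)
    (hφ : Integrable (fun x => (φ x) ^ 2) ν)
    (hψ : Integrable (fun x => |⟪β x, n⟫| * (ψ x) ^ 2) ν) :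
    |∫ x, ⟪β x - βc, n⟫ * (φ x * ψ x) ∂ν| ≤
      L * Real.sqrt hK * Real.sqrt (∫ x, (φ x) ^ 2 ∂ν) *
        Real.sqrt (∫ x, |⟪β x, n⟫| * (ψ x) ^ 2 ∂ν) := by
  have hφ0 : 0 ≤ᵐ[ν] fun x => φ x ^ 2 := .of_forall fun x => sq_nonneg _
  have hψ0 : 0 ≤ᵐ[ν] fun x => |⟪β x, n⟫| * ψ x ^ 2 :=
    .of_forall fun x => mul_nonneg (abs_nonneg _) (sq_nonneg _)
  have hpointwise : ∀ᵐ x ∂ν, ‖⟪β x - βc, n⟫ * (φ x * ψ x)‖ ≤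
      L * √hK * (√(φ x ^ 2) * √(|⟪β x, n⟫| * ψ x ^ 2)) := by
    filter_upwards [hfar, hclose] with x hfar_x hclose_x
    rw [Real.sqrt_mul (abs_nonneg _), Real.sqrt_sq_eq_abs, Real.sqrt_sq_eq_abs, Real.norm_eq_abs,
      abs_mul, abs_mul]
    calc |⟪β x - βc, n⟫| * (|φ x| * |ψ x|)
        ≤ L * √hK * √|⟪β x, n⟫| * (|φ x| * |ψ x|) := by
          gcongr; exact abs_inner_sub_le_mul_sqrt hn hL hhK hfar_x hclose_x
      _ = L * √hK * (|φ x| * (√|⟪β x, n⟫| * |ψ x|)) := by ring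
  calc |∫ x, ⟪β x - βc, n⟫ * (φ x * ψ x) ∂ν|
      ≤ ∫ x, L * √hK * (√(φ x ^ 2) * √(|⟪β x, n⟫| * ψ x ^ 2)) ∂ν :=
        norm_integral_le_of_norm_le
          ((integrable_sqrt_mul_sqrt hφ0 hψ0 hφ hψ).const_mul _) hpointwise
    _ = L * √hK * ∫ x, √(φ x ^ 2) * √(|⟪β x, n⟫| * ψ x ^ 2) ∂ν := integral_const_mul _ _
    _ ≤ L * √hK * (√(∫ x, φ x ^ 2 ∂ν) * √(∫ x, |⟪β x, n⟫| * ψ x ^ 2 ∂ν)) := by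
        gcongr; exact integral_sqrt_mul_sqrt_le hφ0 hψ0 hφ hψ
    _ = _ := by ring

/-- key mechanism of the optimal estimate under mesh condition (3.10):
let `ν` be the surface measure on a face `e ∉ E_h⁰` of element `K` with (constant) unit
normal `n`, so that `h_K < |β·n|` on `e`, and let `β^c` be a constant approximation with
`‖β − β^c‖ ≤ L h_K` on `e` (`L = |β|_{1,∞}`). Then for `φ, ψ ∈ L₂(e)`:
`|∫_e ((β−β^c)·n) φ ψ| ≤ L √h_K ‖φ‖_{L₂(e)} ‖ |β·n|^{1/2} ψ ‖_{L₂(e)}`. -/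
theorem weak_galerkin_stmt_14 {d : ℕ} (ν : Measure (EuclideanSpace ℝ (Fin d)))
    (β : EuclideanSpace ℝ (Fin d) → EuclideanSpace ℝ (Fin d))
    (βc n : EuclideanSpace ℝ (Fin d)) (hK L : ℝ)
    (φ ψ : EuclideanSpace ℝ (Fin d) → ℝ)
    (hn : ‖n‖ = 1) (hL : 0 ≤ L) (hhK : 0 ≤ hK)
    (hfar : ∀ᵐ x ∂ν, hK < |⟪β x, n⟫|)
    (hclose : ∀ᵐ x ∂ν, ‖β x - βc‖ ≤ L * hK)
    (hint : Integrable (fun x => ⟪β x - βc, n⟫ * (φ x * ψ x)) ν)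
    (hφ : Integrable (fun x => (φ x) ^ 2) ν)
    (hψ : Integrable (fun x => |⟪β x, n⟫| * (ψ x) ^ 2) ν) :
    |∫ x, ⟪β x - βc, n⟫ * (φ x * ψ x) ∂ν| ≤
      L * Real.sqrt hK * Real.sqrt (∫ x, (φ x) ^ 2 ∂ν) *
        Real.sqrt (∫ x, |⟪β x, n⟫| * (ψ x) ^ 2 ∂ν) :=
  weak_galerkin_stmt_14_general ν β βc n hK L φ ψ hn hL hhK hfar hclose hφ hψ
end

section
/- Let H be a real inner product space, e ∈ H, and suppose for some constants M ≥ 0 that the linear functional v ↦ a(e,v) satisfies |a(e,v)| ≤ M‖v‖ for all v in a subspace containing e, where a is a bilinear form with a(v,v) ≥ ‖v‖² on that subspace. Then ‖e‖ ≤ M. Applied to the WG error: if a(e_h⁺, v) = l₁(u,v) − l₂(u,v) + l₃(u,v) + s(Q_h⁺u, v) for all v ∈ V_h⁰ and each term is bounded by C h^{k+1}|u|_{k+1} |||v|||, then ‖Q₀⁺u − u_h⁰‖_{L₂} ≤ σ₀^{−1/2} |||e_h⁺||| ≤ C h^{k+1}|u|_{k+1}. -/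
/-- abstract coercivity/duality argument for the optimal WG estimate.
If `e` lies in a subspace `S` of a real inner product space on which the bilinear form `a`
is coercive (`‖v‖² ≤ a v v`), and the functional `v ↦ a e v` is bounded by `M‖v‖` on `S`,
then `‖e‖ ≤ M`; moreover if `σ₀ L2e² ≤ ‖e‖²` (the L₂ norm of the interior error is
controlled by the energy norm) then `L2e ≤ σ₀^(-1/2) M`. -/
theorem weak_galerkin_stmt_16 {H : Type*} [NormedAddCommGroup H] [InnerProductSpace ℝ H]
    (S : Submodule ℝ H) (a : H → H → ℝ) (e : H) (M σ0 L2e : ℝ)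
    (hM : 0 ≤ M) (he : e ∈ S)
    (hbdd : ∀ v ∈ S, |a e v| ≤ M * ‖v‖)
    (hcoer : ∀ v ∈ S, ‖v‖ ^ 2 ≤ a v v)
    (hσ0 : 0 < σ0) (hL2n : 0 ≤ L2e) (hL2 : σ0 * L2e ^ 2 ≤ ‖e‖ ^ 2) :
    ‖e‖ ≤ M ∧ L2e ≤ σ0 ^ (-(1/2 : ℝ)) * M := by
  have h1 : ‖e‖ ^ 2 ≤ M * ‖e‖ :=
    le_trans (le_trans (hcoer e he) (le_abs_self _)) (hbdd e he)
  have heM : ‖e‖ ≤ M := by nlinarith [norm_nonneg e]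
  refine ⟨heM, ?_⟩
  have hs : σ0 ^ (-(1/2 : ℝ)) = (Real.sqrt σ0)⁻¹ := by
    rw [Real.rpow_neg hσ0.le, ← Real.sqrt_eq_rpow]
  rw [hs]
  have hsq : (0:ℝ) < Real.sqrt σ0 := Real.sqrt_pos.mpr hσ0
  rw [inv_mul_eq_div, le_div_iff₀ hsq]
  have : (L2e * Real.sqrt σ0) ^ 2 ≤ M ^ 2 := by
    have : Real.sqrt σ0 ^ 2 = σ0 := Real.sq_sqrt hσ0.le
    nlinarith [norm_nonneg e]
  nlinarith [mul_nonneg hL2n hsq.le]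
end
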